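/- Let d ≥ 2. For all ξ,η ∈ S^{d−1} and t,s ∈ [−1,1], the points (tξ,t) and (sη,s) lie on X₀ and satisfy the identity 1 − cos d_{X₀}((tξ,t),(sη,s)) = 1 − cos d_{[−1,1]}(t,s) + t·s·(1 − cos d_S(ξ,η)). Moreover, there exist absolute constants c₁, c₂ > 0 such that whenever t·s ≥ 0, c₁·d_{X₀}((tξ,t),(sη,s)) ≤ d_{[−1,1]}(t,s) + √(ts)·d_S(ξ,η) ≤ c₂·d_{X₀}((tξ,t),(sη,s)). -/

import Mathlib

/-!
Writing `u = √(1-t²)`, `v = √(1-s²)` and `c = ⟨ξ,η⟩`, the three cosines are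
`cos d_{X₀} = tsc + uv`, `cos d_{[-1,1]} = ts + uv` and `cos d_S = c`, so the identity is linear
algebra. For the comparison, `1 - cos x` is squeezed between `x²/8` and `x²/2` on `[0, π]`;
applied to each term of the identity this makes `d_{X₀}²` comparable to
`d_{[-1,1]}² + ts·d_S²`, which is comparable to `(d_{[-1,1]} + √(ts)·d_S)²`.
-/

open MeasureTheory Real Set

noncomputable section

/-- The double conic surface `X₀ = {(x,t) ∈ ℝ^d × ℝ : ‖x‖ = |t|, |t| ≤ 1}`. -/
def X0 (d : ℕ) : Set (EuclideanSpace ℝ (Fin d) × ℝ) :=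
  {p | ‖p.1‖ = |p.2| ∧ |p.2| ≤ 1}

/-- The distance `d_{X₀}((x,t),(y,s)) = arccos(⟨x,y⟩ + √(1−t²)√(1−s²))`. -/
def dX0 {d : ℕ} (p q : EuclideanSpace ℝ (Fin d) × ℝ) : ℝ :=
  Real.arccos ((inner ℝ p.1 q.1 : ℝ) + Real.sqrt (1 - p.2 ^ 2) * Real.sqrt (1 - q.2 ^ 2))

/-- The cap `c((x,t),r) = {(y,s) ∈ X₀ : d_{X₀}((x,t),(y,s)) ≤ r}`. -/
def cap0 {d : ℕ} (p : EuclideanSpace ℝ (Fin d) × ℝ) (r : ℝ) :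
    Set (EuclideanSpace ℝ (Fin d) × ℝ) :=
  {q ∈ X0 d | dX0 p q ≤ r}

/-- The distance `d_{[−1,1]}(t,s) = arccos(ts + √(1−t²)√(1−s²))` on `[−1,1]`. -/
def dI (t s : ℝ) : ℝ := Real.arccos (t * s + Real.sqrt (1 - t ^ 2) * Real.sqrt (1 - s ^ 2))

/-- The geodesic distance `d_S(ξ,η) = arccos⟨ξ,η⟩` on the unit sphere. -/
def dS {d : ℕ} (ξ η : EuclideanSpace ℝ (Fin d)) : ℝ := Real.arccos (inner ℝ ξ η : ℝ)

lemma one_sub_cos_le_sq_div_two (x : ℝ) : 1 - cos x ≤ x ^ 2 / 2 := by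
  linarith [one_sub_sq_div_two_le_cos (x := x)]

lemma sq_div_eight_le_one_sub_cos {x : ℝ} (hx : x ∈ Icc 0 π) : x ^ 2 / 8 ≤ 1 - cos x := by
  have hπ : 1 / 8 ≤ 2 / π ^ 2 := by
    rw [div_le_div_iff₀ (by norm_num) (by positivity)]
    nlinarith [pi_le_four, pi_pos]
  have := cos_le_one_sub_mul_cos_sq (abs_le.2 ⟨by linarith [hx.1, pi_pos], hx.2⟩)
  nlinarith [sq_nonneg x]

lemma arccos_mem_Icc (x : ℝ) : arccos x ∈ Icc 0 π := ⟨arccos_nonneg x, arccos_le_pi x⟩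

theorem half_mul_le_add_sqrt_mul_le_three_mul {A a θ r : ℝ} (hA : A ∈ Icc 0 π)
    (ha : a ∈ Icc 0 π) (hθ : θ ∈ Icc 0 π) (hr : 0 ≤ r)
    (h : 1 - cos A = 1 - cos a + r * (1 - cos θ)) :
    1 / 2 * A ≤ a + √r * θ ∧ a + √r * θ ≤ 3 * A := by
  set b := √r * θ
  have hb : b ^ 2 = r * θ ^ 2 := by rw [mul_pow, sq_sqrt hr]
  have hb0 : 0 ≤ b := mul_nonneg (sqrt_nonneg r) hθ.1
  have hE_le : 1 - cos A ≤ (a ^ 2 + b ^ 2) / 2 := by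
    rw [h, hb]
    linarith [one_sub_cos_le_sq_div_two a,
      mul_le_mul_of_nonneg_left (one_sub_cos_le_sq_div_two θ) hr]
  have hE_ge : (a ^ 2 + b ^ 2) / 8 ≤ 1 - cos A := by
    rw [h, hb]
    linarith [sq_div_eight_le_one_sub_cos ha,
      mul_le_mul_of_nonneg_left (sq_div_eight_le_one_sub_cos hθ) hr]
  constructor
  · have hsq : A ^ 2 ≤ (2 * (a + b)) ^ 2 := by
      nlinarith [sq_div_eight_le_one_sub_cos hA, mul_nonneg ha.1 hb0]
    have hle := (pow_le_pow_iff_left₀ hA.1 (by linarith [ha.1]) two_ne_zero).1 hsq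
    linarith
  · have hsq : (a + b) ^ 2 ≤ (3 * A) ^ 2 := by
      nlinarith [one_sub_cos_le_sq_div_two A, sq_nonneg (a - b)]
    exact (pow_le_pow_iff_left₀ (by linarith [ha.1]) (by linarith [hA.1]) two_ne_zero).1 hsq

lemma abs_mul_mul_add_sqrt_mul_sqrt_le_one {t s c : ℝ} (ht : t ∈ Icc (-1) 1)
    (hs : s ∈ Icc (-1) 1) (hc : |c| ≤ 1) :
    |t * s * c + √(1 - t ^ 2) * √(1 - s ^ 2)| ≤ 1 := by
  have hu : √(1 - t ^ 2) ^ 2 = 1 - t ^ 2 := sq_sqrt (by nlinarith [ht.1, ht.2])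
  have hv : √(1 - s ^ 2) ^ 2 = 1 - s ^ 2 := sq_sqrt (by nlinarith [hs.1, hs.2])
  have hts : |t * s * c| ≤ |t| * |s| := by
    rw [abs_mul, abs_mul]
    exact mul_le_of_le_one_right (by positivity) hc
  -- AM-GM on both products: `|t||s| + uv ≤ (t² + s² + u² + v²) / 2 = 1`
  have hamgm : |t| * |s| + √(1 - t ^ 2) * √(1 - s ^ 2) ≤ 1 := by
    nlinarith [sq_nonneg (|t| - |s|), sq_nonneg (√(1 - t ^ 2) - √(1 - s ^ 2)), sq_abs t, sq_abs s]
  calc |t * s * c + √(1 - t ^ 2) * √(1 - s ^ 2)|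
      ≤ |t * s * c| + |√(1 - t ^ 2) * √(1 - s ^ 2)| := abs_add_le _ _
    _ ≤ |t| * |s| + √(1 - t ^ 2) * √(1 - s ^ 2) := by
      rw [abs_of_nonneg (a := √(1 - t ^ 2) * √(1 - s ^ 2)) (by positivity)]
      linarith
    _ ≤ 1 := hamgm

lemma cos_arccos_mul_mul_add_sqrt_mul_sqrt {t s c : ℝ} (ht : t ∈ Icc (-1) 1)
    (hs : s ∈ Icc (-1) 1) (hc : |c| ≤ 1) :
    cos (arccos (t * s * c + √(1 - t ^ 2) * √(1 - s ^ 2))) =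
      t * s * c + √(1 - t ^ 2) * √(1 - s ^ 2) :=
  have h := abs_le.1 (abs_mul_mul_add_sqrt_mul_sqrt_le_one ht hs hc)
  cos_arccos h.1 h.2

lemma abs_real_inner_le_one_of_mem_sphere {E : Type*} [NormedAddCommGroup E]
    [InnerProductSpace ℝ E] {x y : E} (hx : x ∈ Metric.sphere 0 1) (hy : y ∈ Metric.sphere 0 1) :
    |inner ℝ x y| ≤ 1 := by
  simpa [mem_sphere_zero_iff_norm.1 hx, mem_sphere_zero_iff_norm.1 hy] using
    abs_real_inner_le_norm x y

section Sphere

variable {d : ℕ} {ξ η : EuclideanSpace ℝ (Fin d)}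

lemma smul_mem_X0 (hξ : ξ ∈ Metric.sphere 0 1) {t : ℝ} (ht : t ∈ Icc (-1) 1) :
    (t • ξ, t) ∈ X0 d :=
  ⟨by simp [norm_smul, mem_sphere_zero_iff_norm.1 hξ], abs_le.2 ht⟩

lemma cos_dS (hξ : ξ ∈ Metric.sphere 0 1) (hη : η ∈ Metric.sphere 0 1) :
    cos (dS ξ η) = inner ℝ ξ η :=
  have h := abs_le.1 (abs_real_inner_le_one_of_mem_sphere hξ hη)
  cos_arccos h.1 h.2

lemma cos_dI {t s : ℝ} (ht : t ∈ Icc (-1) 1) (hs : s ∈ Icc (-1) 1) :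
    cos (dI t s) = t * s + √(1 - t ^ 2) * √(1 - s ^ 2) := by
  rw [dI]
  simpa using cos_arccos_mul_mul_add_sqrt_mul_sqrt ht hs (c := 1) abs_one.le

lemma cos_dX0_smul (hξ : ξ ∈ Metric.sphere 0 1) (hη : η ∈ Metric.sphere 0 1) {t s : ℝ}
    (ht : t ∈ Icc (-1) 1) (hs : s ∈ Icc (-1) 1) :
    cos (dX0 (t • ξ, t) (s • η, s)) = t * s * inner ℝ ξ η + √(1 - t ^ 2) * √(1 - s ^ 2) := by
  have hinner : inner ℝ (t • ξ) (s • η) = t * s * inner ℝ ξ η := by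
    rw [real_inner_smul_left, real_inner_smul_right, mul_assoc]
  rw [dX0, hinner]
  exact cos_arccos_mul_mul_add_sqrt_mul_sqrt ht hs (abs_real_inner_le_one_of_mem_sphere hξ hη)

lemma one_sub_cos_dX0_smul (hξ : ξ ∈ Metric.sphere 0 1) (hη : η ∈ Metric.sphere 0 1)
    {t s : ℝ} (ht : t ∈ Icc (-1) 1) (hs : s ∈ Icc (-1) 1) :
    1 - cos (dX0 (t • ξ, t) (s • η, s)) = 1 - cos (dI t s) + t * s * (1 - cos (dS ξ η)) := by
  rw [cos_dX0_smul hξ hη ht hs, cos_dI ht hs, cos_dS hξ hη]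
  ring

end Sphere

theorem stmt1_general (d : ℕ) :
    (∀ ξ ∈ Metric.sphere (0 : EuclideanSpace ℝ (Fin d)) 1,
      ∀ η ∈ Metric.sphere (0 : EuclideanSpace ℝ (Fin d)) 1,
      ∀ t ∈ Set.Icc (-1 : ℝ) 1, ∀ s ∈ Set.Icc (-1 : ℝ) 1,
        (t • ξ, t) ∈ X0 d ∧ (s • η, s) ∈ X0 d ∧
        1 - Real.cos (dX0 (t • ξ, t) (s • η, s)) =
          1 - Real.cos (dI t s) + t * s * (1 - Real.cos (dS ξ η))) ∧
    (∃ c₁ c₂ : ℝ, 0 < c₁ ∧ 0 < c₂ ∧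
      ∀ ξ ∈ Metric.sphere (0 : EuclideanSpace ℝ (Fin d)) 1,
        ∀ η ∈ Metric.sphere (0 : EuclideanSpace ℝ (Fin d)) 1,
        ∀ t ∈ Set.Icc (-1 : ℝ) 1, ∀ s ∈ Set.Icc (-1 : ℝ) 1, 0 ≤ t * s →
          c₁ * dX0 (t • ξ, t) (s • η, s) ≤ dI t s + Real.sqrt (t * s) * dS ξ η ∧
          dI t s + Real.sqrt (t * s) * dS ξ η ≤ c₂ * dX0 (t • ξ, t) (s • η, s)) := by
  refine ⟨fun ξ hξ η hη t ht s hs =>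
      ⟨smul_mem_X0 hξ ht, smul_mem_X0 hη hs, one_sub_cos_dX0_smul hξ hη ht hs⟩,
    1 / 2, 3, by norm_num, by norm_num, fun ξ hξ η hη t ht s hs hts => ?_⟩
  exact half_mul_le_add_sqrt_mul_le_three_mul (arccos_mem_Icc _) (arccos_mem_Icc _)
    (arccos_mem_Icc _) hts (one_sub_cos_dX0_smul hξ hη ht hs)

/-- for `ξ,η ∈ S^{d−1}` and `t,s ∈ [−1,1]`, the points `(tξ,t)` and
`(sη,s)` lie on `X₀` and
`1 − cos d_{X₀}((tξ,t),(sη,s)) = 1 − cos d_{[−1,1]}(t,s) + ts(1 − cos d_S(ξ,η))`;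
moreover there are absolute constants `c₁,c₂ > 0` such that whenever `ts ≥ 0`,
`c₁ d_{X₀} ≤ d_{[−1,1]}(t,s) + √(ts) d_S(ξ,η) ≤ c₂ d_{X₀}`. -/
theorem stmt1 (d : ℕ) (hd : 2 ≤ d) :
    (∀ ξ ∈ Metric.sphere (0 : EuclideanSpace ℝ (Fin d)) 1,
      ∀ η ∈ Metric.sphere (0 : EuclideanSpace ℝ (Fin d)) 1,
      ∀ t ∈ Set.Icc (-1 : ℝ) 1, ∀ s ∈ Set.Icc (-1 : ℝ) 1,
        (t • ξ, t) ∈ X0 d ∧ (s • η, s) ∈ X0 d ∧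
        1 - Real.cos (dX0 (t • ξ, t) (s • η, s)) =
          1 - Real.cos (dI t s) + t * s * (1 - Real.cos (dS ξ η))) ∧
    (∃ c₁ c₂ : ℝ, 0 < c₁ ∧ 0 < c₂ ∧
      ∀ ξ ∈ Metric.sphere (0 : EuclideanSpace ℝ (Fin d)) 1,
        ∀ η ∈ Metric.sphere (0 : EuclideanSpace ℝ (Fin d)) 1,
        ∀ t ∈ Set.Icc (-1 : ℝ) 1, ∀ s ∈ Set.Icc (-1 : ℝ) 1, 0 ≤ t * s →
          c₁ * dX0 (t • ξ, t) (s • η, s) ≤ dI t s + Real.sqrt (t * s) * dS ξ η ∧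
          dI t s + Real.sqrt (t * s) * dS ξ η ≤ c₂ * dX0 (t • ξ, t) (s • η, s)) :=
  stmt1_general d
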